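/- Suppose the digraph of W is strongly connected and structurally balanced with gauge g for the full node set. Then for every nominal prescribed-time trajectory X with parameters ρ1, ρ2 > 0 and prescribed time T1 > 0, there exists c ∈ ℝ such that X t k = c · g k for all t ≥ T1 and all nodes k (prescribed-time bipartite consensus within the preassigned time T1). -/

import Mathlib

open Matrix

/-- Time-varying gain: `μ_T(t) = κ/(T − t)` for `0 ≤ t < T`, `0` otherwise. -/
noncomputable def gain (κ T t : ℝ) : ℝ := if 0 ≤ t ∧ t < T then κ / (T - t) else 0

/-- Signed Laplacian `L = D − W` with `D k k = ∑_l |W k l|`. -/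
noncomputable def sLap {N : ℕ} (W : Matrix (Fin N) (Fin N) ℝ) : Matrix (Fin N) (Fin N) ℝ :=
  Matrix.diagonal (fun k => ∑ l, |W k l|) - W

/-- Node `i` reaches node `j`: reflexive–transitive closure of the edge relation
`E i j ↔ W j i ≠ 0`. -/
def Reaches {N : ℕ} (W : Matrix (Fin N) (Fin N) ℝ) : Fin N → Fin N → Prop :=
  Relation.ReflTransGen (fun i j => W j i ≠ 0)

def StronglyConnected {N : ℕ} (W : Matrix (Fin N) (Fin N) ℝ) : Prop :=
  ∀ i j, Reaches W i j

def QuasiStronglyConnected {N : ℕ} (W : Matrix (Fin N) (Fin N) ℝ) : Prop :=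
  ∃ r, ∀ j, Reaches W r j

def WeaklyConnected {N : ℕ} (W : Matrix (Fin N) (Fin N) ℝ) : Prop :=
  ∀ i j, Relation.ReflTransGen (fun a b => W b a ≠ 0 ∨ W a b ≠ 0) i j

/-- `k` is a leader: every node reaching `k` is reached back by `k`. -/
def IsLeader {N : ℕ} (W : Matrix (Fin N) (Fin N) ℝ) (k : Fin N) : Prop :=
  ∀ j, Reaches W j k → Reaches W k j

/-- Closed strong component of a leader `k`. -/
def CSC {N : ℕ} (W : Matrix (Fin N) (Fin N) ℝ) (k : Fin N) : Set (Fin N) :=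
  {j | Reaches W j k ∧ Reaches W k j}

/-- A gauge for a node set `S`. -/
def IsGauge {N : ℕ} (W : Matrix (Fin N) (Fin N) ℝ) (S : Set (Fin N)) (g : Fin N → ℝ) : Prop :=
  (∀ k ∈ S, g k = 1 ∨ g k = -1) ∧ ∀ k ∈ S, ∀ l ∈ S, g k * W k l * g l = |W k l|

/-- Nominal prescribed-time trajectory of the protocol (4). -/
def NominalTraj {N : ℕ} (W : Matrix (Fin N) (Fin N) ℝ) (κ ρ1 ρ2 T1 : ℝ)
    (X : ℝ → Fin N → ℝ) : Prop :=
  Continuous X ∧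
  ∀ t : ℝ, 0 ≤ t → t ≠ T1 →
    HasDerivAt X ((-(ρ1 + ρ2 * gain κ T1 t)) • (sLap W).mulVec (X t)) t

/-! The gauge `g` conjugates the signed Laplacian of `W` into the ordinary Laplacian of the
nonnegative matrix `|W|`, so `g * X` is a nominal trajectory for `|W|` and it suffices to reach
consensus there. Strong connectivity yields a positive left null vector `ξ` of that Laplacian, so
`ξ ⬝ᵥ X t` is conserved before `T1` and `V = ∑ ξ i (X i - c) ^ 2`, with `c` the conserved weighted
average, satisfies `V' = -(ρ1 + ρ2 μ) E`, where the weighted Dirichlet energy `E` is coercive on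
`ξ⊥`. As `μ t = κ / (T1 - t)`, this gives `V' ≤ -β V / (T1 - t)`, hence `V t ≤ C (T1 - t) ^ β`
and `V T1 = 0`. After `T1` the consensus state is an equilibrium of a linear ODE, and uniqueness
of solutions keeps the trajectory there. -/

open Set

theorem exists_pos_mul_sq_norm_le {E : Type*} [NormedAddCommGroup E] [NormedSpace ℝ E]
    [FiniteDimensional ℝ E] {q : E → ℝ} (hq : Continuous q)
    (hhom : ∀ (c : ℝ) (x : E), q (c • x) = c ^ 2 * q x) (hpos : ∀ x, x ≠ 0 → 0 < q x) :
    ∃ lam, 0 < lam ∧ ∀ x, lam * ‖x‖ ^ 2 ≤ q x := by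
  have hq0 : q 0 = 0 := by simpa using hhom 0 0
  rcases subsingleton_or_nontrivial E with hE | hE
  · exact ⟨1, one_pos, fun x => by simp [Subsingleton.elim x 0, hq0]⟩
  obtain ⟨u, hu, hmin⟩ := (isCompact_sphere (0 : E) 1).exists_isMinOn
    (NormedSpace.sphere_nonempty.2 zero_le_one) hq.continuousOn
  have hu0 : u ≠ 0 := ne_zero_of_mem_unit_sphere ⟨u, hu⟩
  refine ⟨q u, hpos u hu0, fun x => ?_⟩
  rcases eq_or_ne x 0 with rfl | hx
  · simp [hq0]
  have hx' : ‖x‖⁻¹ • x ∈ Metric.sphere (0 : E) 1 := by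
    simp [norm_smul, hx]
  calc q u * ‖x‖ ^ 2 ≤ q (‖x‖⁻¹ • x) * ‖x‖ ^ 2 := by gcongr; exact hmin hx'
    _ = q x := by rw [hhom]; field_simp

theorem le_zero_of_hasDerivAt_le_neg_div_sub {V V' : ℝ → ℝ} {β T : ℝ} (hβ : 0 < β) (hT : 0 < T)
    (hV : ContinuousWithinAt V (Ico 0 T) T) (hd : ∀ t ∈ Ico 0 T, HasDerivAt V (V' t) t)
    (hle : ∀ t ∈ Ico 0 T, V' t ≤ -(β / (T - t)) * V t) : V T ≤ 0 := by
  have hanti : AntitoneOn (fun t => V t * (T - t) ^ (-β)) (Ico 0 T) := by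
    have hderiv : ∀ t ∈ Ico 0 T, HasDerivAt (fun t => V t * (T - t) ^ (-β))
        ((T - t) ^ (-β) * (V' t + β / (T - t) * V t)) t := by
      intro t ht
      have hTt : T - t ≠ 0 := (sub_pos.2 ht.2).ne'
      refine ((hd t ht).mul (((hasDerivAt_id t).const_sub T).rpow_const (p := -β)
        (Or.inl hTt))).congr_deriv ?_
      rw [id, Real.rpow_sub_one hTt]
      field_simp
    refine antitoneOn_of_hasDerivWithinAt_nonpos (convex_Ico 0 T)
      (fun t ht => (hderiv t ht).continuousAt.continuousWithinAt)
      (fun t ht => (hderiv t (interior_subset ht)).hasDerivWithinAt) (fun t ht => ?_)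
    have ht' := interior_subset ht
    have := hle t ht'
    exact mul_nonpos_of_nonneg_of_nonpos (Real.rpow_nonneg (sub_pos.2 ht'.2).le _) (by linarith)
  have hbound : ∀ t ∈ Ico 0 T, V t ≤ V 0 * T ^ (-β) * (T - t) ^ β := by
    intro t ht
    have hTt : 0 < T - t := sub_pos.2 ht.2
    have := hanti ⟨le_rfl, hT⟩ ht ht.1
    simp only [sub_zero] at this
    calc V t = V t * (T - t) ^ (-β) * (T - t) ^ β := by
          rw [mul_assoc, ← Real.rpow_add hTt, neg_add_cancel, Real.rpow_zero, mul_one]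
      _ ≤ V 0 * T ^ (-β) * (T - t) ^ β := by gcongr
  have hlim : ContinuousWithinAt (fun t => V 0 * T ^ (-β) * (T - t) ^ β) (Ico 0 T) T :=
    (continuousAt_const.mul
      ((continuousAt_const.sub continuousAt_id).rpow_const (Or.inr hβ.le))).continuousWithinAt
  have := hV.closure_le (by rw [closure_Ico hT.ne]; exact ⟨hT.le, le_rfl⟩) hlim hbound
  simpa [Real.zero_rpow hβ.ne'] using this

theorem hasDerivWithinAt_Ici_of_forall_gt {E : Type*} [NormedAddCommGroup E] [NormedSpace ℝ E]
    {f f' : ℝ → E} {a : ℝ} (hf : ContinuousWithinAt f (Ioi a) a)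
    (hd : ∀ t, a < t → HasDerivAt f (f' t) t) (hf' : ContinuousWithinAt f' (Ioi a) a) :
    HasDerivWithinAt f (f' a) (Ici a) a := by
  refine hasDerivWithinAt_Ici_of_tendsto_deriv
    (fun t ht => (hd t ht).differentiableAt.differentiableWithinAt) hf self_mem_nhdsWithin ?_
  refine hf'.tendsto.congr' ?_
  filter_upwards [self_mem_nhdsWithin] with t ht using (hd t ht).deriv.symm

theorem HasDerivAt.dotProduct_const {N : ℕ} {f : ℝ → Fin N → ℝ} {f' : Fin N → ℝ} {t : ℝ}
    (hf : HasDerivAt f f' t) (ξ : Fin N → ℝ) : HasDerivAt (fun s => ξ ⬝ᵥ f s) (ξ ⬝ᵥ f') t :=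
  HasDerivAt.fun_sum fun i _ => (hasDerivAt_pi.1 hf i).const_mul (ξ i)

theorem sum_mul_sq_le_sum_mul_sq_norm {N : ℕ} {ξ : Fin N → ℝ} (hξ : ∀ i, 0 ≤ ξ i)
    (z : Fin N → ℝ) : ∑ i, ξ i * z i ^ 2 ≤ (∑ i, ξ i) * ‖z‖ ^ 2 := by
  rw [Finset.sum_mul]
  refine Finset.sum_le_sum fun i _ => mul_le_mul_of_nonneg_left ?_ (hξ i)
  rw [← sq_abs, ← Real.norm_eq_abs]
  exact pow_le_pow_left₀ (norm_nonneg _) (norm_le_pi_norm z i) 2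

section Laplacian

variable {N : ℕ}

theorem StronglyConnected.forall_of_imp {W : Matrix (Fin N) (Fin N) ℝ} (hW : StronglyConnected W)
    {P : Fin N → Prop} (hP : ∀ i j, W j i ≠ 0 → P i → P j) {i : Fin N} (hi : P i) (j : Fin N) :
    P j := by
  induction hW i j with
  | refl => exact hi
  | tail _ hedge ih => exact hP _ _ hedge ih

theorem sLap_mulVec_apply (W : Matrix (Fin N) (Fin N) ℝ) (x : Fin N → ℝ) (k : Fin N) :
    (sLap W *ᵥ x) k = (∑ l, |W k l|) * x k - ∑ l, W k l * x l := by
  rw [sLap, Matrix.sub_mulVec, Pi.sub_apply, Matrix.mulVec_diagonal]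
  rfl

theorem vecMul_sLap_apply (W : Matrix (Fin N) (Fin N) ℝ) (ξ : Fin N → ℝ) (j : Fin N) :
    (ξ ᵥ* sLap W) j = ξ j * ∑ l, |W j l| - ∑ i, ξ i * W i j := by
  rw [sLap, Matrix.vecMul_sub, Pi.sub_apply, Matrix.vecMul_diagonal, mul_comm]
  rfl

variable {A : Matrix (Fin N) (Fin N) ℝ} (hA : ∀ i j, 0 ≤ A i j)
include hA

theorem sLap_mulVec_const (c : ℝ) : sLap A *ᵥ (fun _ => c) = 0 := by
  ext k
  simp [sLap_mulVec_apply, abs_of_nonneg (hA _ _), Finset.sum_mul]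

theorem sum_mul_apply_of_vecMul_sLap_eq_zero {ξ : Fin N → ℝ} (hξ : ξ ᵥ* sLap A = 0) (j : Fin N) :
    ∑ i, ξ i * A i j = ξ j * ∑ l, A j l := by
  have := congrFun hξ j
  simp only [vecMul_sLap_apply, abs_of_nonneg (hA _ _), Pi.zero_apply] at this
  linarith

theorem pos_of_vecMul_sLap_eq_zero (hSC : StronglyConnected A) {ξ : Fin N → ℝ}
    (hξ : ξ ᵥ* sLap A = 0) {i : Fin N} (hi : 0 < ξ i) (j : Fin N) : 0 < ξ j := by
  set p : Fin N → ℝ := fun i => max (ξ i) 0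
  have hp : ∀ i, 0 ≤ p i := fun i => le_max_right _ _
  -- The positive part `p` of `ξ` has `p ᵥ* sLap A ≤ 0` with total sum `p ⬝ᵥ (sLap A *ᵥ 1) = 0`,
  -- so `p ᵥ* sLap A = 0`: no edge leads from a node with `ξ ≤ 0` to one with `ξ > 0`.
  have hle : ∀ j, (p ᵥ* sLap A) j ≤ 0 := by
    intro j
    rw [vecMul_sLap_apply]
    simp only [abs_of_nonneg (hA _ _)]
    rcases lt_or_ge 0 (ξ j) with hj | hj
    · have hpj : p j = ξ j := max_eq_left hj.le
      rw [hpj, ← sum_mul_apply_of_vecMul_sLap_eq_zero hA hξ, sub_nonpos]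
      exact Finset.sum_le_sum fun i _ => mul_le_mul_of_nonneg_right (le_max_left _ _) (hA i j)
    · have hpj : p j = 0 := max_eq_right hj
      rw [hpj, zero_mul, zero_sub, neg_nonpos]
      exact Finset.sum_nonneg fun i _ => mul_nonneg (hp i) (hA i j)
  have hsum : ∑ j, (p ᵥ* sLap A) j = 0 := by
    have := Matrix.dotProduct_mulVec p (sLap A) (fun _ => 1)
    simpa [sLap_mulVec_const hA, dotProduct] using this.symm
  have heq : ∀ j, (p ᵥ* sLap A) j = 0 := fun j =>
    (Finset.sum_eq_zero_iff_of_nonpos (fun j _ => hle j)).1 hsum j (Finset.mem_univ j)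
  by_contra! hj
  refine (hSC.forall_of_imp (P := fun k => ξ k ≤ 0) (fun k l hkl hk => ?_) hj i).not_gt hi
  have hpk : p k = 0 := max_eq_right hk
  have hin : ∑ i, p i * A i k = 0 := by
    simpa [vecMul_sLap_apply, abs_of_nonneg (hA _ _), hpk] using heq k
  have hl : p l * A l k = 0 := (Finset.sum_eq_zero_iff_of_nonneg
    (fun i _ => mul_nonneg (hp i) (hA i k))).1 hin l (Finset.mem_univ l)
  exact max_eq_right_iff.1 ((mul_eq_zero.1 hl).resolve_right hkl)

theorem exists_pos_vecMul_sLap_eq_zero [NeZero N] (hSC : StronglyConnected A) :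
    ∃ ξ : Fin N → ℝ, (∀ i, 0 < ξ i) ∧ ξ ᵥ* sLap A = 0 := by
  have hdet : (sLap A).det = 0 :=
    Matrix.exists_mulVec_eq_zero_iff.1 ⟨fun _ => 1, fun h => by simpa using congrFun h 0,
      sLap_mulVec_const hA 1⟩
  obtain ⟨ξ, hξ0, hξ⟩ := Matrix.exists_vecMul_eq_zero_iff.2 hdet
  obtain ⟨i, hi⟩ := Function.ne_iff.1 hξ0
  rcases lt_or_gt_of_ne hi with hi | hi
  · refine ⟨-ξ, pos_of_vecMul_sLap_eq_zero hA hSC ?_ (i := i) (by simpa using hi), ?_⟩ <;>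
      simp [Matrix.neg_vecMul, hξ]
  · exact ⟨ξ, pos_of_vecMul_sLap_eq_zero hA hSC hξ hi, hξ⟩

end Laplacian

section Dirichlet

variable {N : ℕ}

def dirichletEnergy (ξ : Fin N → ℝ) (A : Matrix (Fin N) (Fin N) ℝ) (z : Fin N → ℝ) : ℝ :=
  ∑ i, ∑ j, ξ i * A i j * (z i - z j) ^ 2

variable {ξ : Fin N → ℝ} {A : Matrix (Fin N) (Fin N) ℝ}

theorem dirichletEnergy_nonneg (hA : ∀ i j, 0 ≤ A i j) (hξ : ∀ i, 0 ≤ ξ i) (z : Fin N → ℝ) :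
    0 ≤ dirichletEnergy ξ A z :=
  Finset.sum_nonneg fun i _ => Finset.sum_nonneg fun j _ =>
    mul_nonneg (mul_nonneg (hξ i) (hA i j)) (sq_nonneg _)

theorem eq_of_dirichletEnergy_eq_zero (hA : ∀ i j, 0 ≤ A i j) (hξ : ∀ i, 0 < ξ i)
    {z : Fin N → ℝ} (hz : dirichletEnergy ξ A z = 0) {i j : Fin N} (hij : A i j ≠ 0) :
    z i = z j := by
  have hterm := fun i j => mul_nonneg (mul_nonneg (hξ i).le (hA i j)) (sq_nonneg (z i - z j))
  have hrow := (Finset.sum_eq_zero_iff_of_nonneg fun i _ => Finset.sum_nonneg fun j _ =>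
    hterm i j).1 hz i (Finset.mem_univ i)
  have := (Finset.sum_eq_zero_iff_of_nonneg fun j _ => hterm i j).1 hrow j (Finset.mem_univ j)
  simpa [(hξ i).ne', hij, sub_eq_zero] using this

theorem two_mul_sum_mul_sLap_mulVec (hA : ∀ i j, 0 ≤ A i j) (hξ : ξ ᵥ* sLap A = 0)
    (z : Fin N → ℝ) :
    2 * ∑ i, ξ i * z i * (sLap A *ᵥ z) i = dirichletEnergy ξ A z := by
  have hcol := sum_mul_apply_of_vecMul_sLap_eq_zero hA hξ
  -- Weighting by the left null vector `ξ` makes in-flow and out-flow of `z ^ 2` balance.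
  have hswap : ∑ i, ∑ j, ξ i * A i j * z j ^ 2 = ∑ i, ∑ j, ξ i * A i j * z i ^ 2 := by
    rw [Finset.sum_comm]
    simp_rw [← Finset.sum_mul, hcol, Finset.mul_sum]
  calc 2 * ∑ i, ξ i * z i * (sLap A *ᵥ z) i
      = ∑ i, ∑ j, 2 * (ξ i * A i j * z i ^ 2 - ξ i * z i * (A i j * z j)) := by
        simp only [sLap_mulVec_apply, abs_of_nonneg (hA _ _), ← Finset.sum_sub_distrib,
          Finset.sum_mul, Finset.mul_sum]
        exact Finset.sum_congr rfl fun i _ => Finset.sum_congr rfl fun j _ => by ring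
    _ = ∑ i, ∑ j, 2 * (ξ i * A i j * z i ^ 2 - ξ i * z i * (A i j * z j))
        + (∑ i, ∑ j, ξ i * A i j * z j ^ 2 - ∑ i, ∑ j, ξ i * A i j * z i ^ 2) := by
        rw [hswap, sub_self, add_zero]
    _ = dirichletEnergy ξ A z := by
        simp only [dirichletEnergy, ← Finset.sum_sub_distrib, ← Finset.sum_add_distrib]
        exact Finset.sum_congr rfl fun i _ => Finset.sum_congr rfl fun j _ => by ring

theorem exists_pos_mul_sq_norm_le_dirichletEnergy (hA : ∀ i j, 0 ≤ A i j) (hξ : ∀ i, 0 < ξ i)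
    (hSC : StronglyConnected A) :
    ∃ lam, 0 < lam ∧ ∀ z, ξ ⬝ᵥ z = 0 → lam * ‖z‖ ^ 2 ≤ dirichletEnergy ξ A z := by
  have hcoer := exists_pos_mul_sq_norm_le (q := fun z => dirichletEnergy ξ A z + (ξ ⬝ᵥ z) ^ 2)
    (by unfold dirichletEnergy dotProduct; fun_prop)
    (fun c z => by
      simp only [dirichletEnergy, dotProduct, Pi.smul_apply, smul_eq_mul, mul_add, ← mul_pow,
        Finset.mul_sum, ← mul_sub]
      congr 1
      · exact Finset.sum_congr rfl fun i _ => Finset.sum_congr rfl fun j _ => by ring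
      · exact congrArg (· ^ 2) (Finset.sum_congr rfl fun i _ => by ring))
    (fun z hz => by
      have hD := dirichletEnergy_nonneg hA (fun i => (hξ i).le) z
      by_contra! hq
      have hD0 : dirichletEnergy ξ A z = 0 := by nlinarith [sq_nonneg (ξ ⬝ᵥ z)]
      have hξz : ξ ⬝ᵥ z = 0 := by nlinarith [sq_nonneg (ξ ⬝ᵥ z)]
      obtain ⟨i, hi⟩ := Function.ne_iff.1 hz
      have hconst : ∀ j, z j = z i := hSC.forall_of_imp (P := fun j => z j = z i)
        (fun j k hkj hj => (eq_of_dirichletEnergy_eq_zero hA hξ hD0 hkj).trans hj) rfl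
      have : (∑ j, ξ j) * z i = 0 := by
        rw [← hξz, dotProduct, Finset.sum_mul]
        exact Finset.sum_congr rfl fun j _ => by rw [hconst j]
      exact hi ((mul_eq_zero.1 this).resolve_left
        (Finset.sum_pos (fun j _ => hξ j) ⟨i, Finset.mem_univ i⟩).ne'))
  obtain ⟨lam, hlam, hle⟩ := hcoer
  exact ⟨lam, hlam, fun z hz => by simpa [hz] using hle z⟩

end Dirichlet

theorem gain_of_le {κ T t : ℝ} (ht : T ≤ t) : gain κ T t = 0 :=
  if_neg fun h => (h.2.trans_le ht).false

theorem gain_of_mem_Ico {κ T t : ℝ} (ht : t ∈ Ico 0 T) : gain κ T t = κ / (T - t) :=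
  if_pos ⟨ht.1, ht.2⟩

theorem neg_add_mul_gain_mul_le {N : ℕ} {ξ z : Fin N → ℝ} {κ ρ1 ρ2 T1 lam E t : ℝ}
    (hξ : ∀ i, 0 ≤ ξ i) (hsum : 0 < ∑ i, ξ i) (hκ : 0 ≤ κ) (hρ1 : 0 ≤ ρ1) (hρ2 : 0 ≤ ρ2)
    (hlam : 0 ≤ lam) (hE : lam * ‖z‖ ^ 2 ≤ E) (ht : t ∈ Ico 0 T1) :
    -(ρ1 + ρ2 * gain κ T1 t) * E ≤
      -(ρ2 * κ * lam / (∑ i, ξ i) / (T1 - t)) * ∑ i, ξ i * z i ^ 2 := by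
  have hTt : 0 < T1 - t := sub_pos.2 ht.2
  have hgain : ρ2 * κ / (T1 - t) ≤ ρ1 + ρ2 * gain κ T1 t := by
    rw [gain_of_mem_Ico ht, mul_div_assoc]; linarith
  rw [neg_mul, neg_mul, neg_le_neg_iff]
  calc ρ2 * κ * lam / (∑ i, ξ i) / (T1 - t) * ∑ i, ξ i * z i ^ 2
      ≤ ρ2 * κ * lam / (∑ i, ξ i) / (T1 - t) * ((∑ i, ξ i) * ‖z‖ ^ 2) := by
        gcongr; exact sum_mul_sq_le_sum_mul_sq_norm hξ z
    _ = ρ2 * κ / (T1 - t) * (lam * ‖z‖ ^ 2) := by field_simp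
    _ ≤ (ρ1 + ρ2 * gain κ T1 t) * E := by gcongr; exact hgain.trans' (by positivity)

namespace NominalTraj

variable {N : ℕ} {W : Matrix (Fin N) (Fin N) ℝ} {κ ρ1 ρ2 T1 : ℝ} {X : ℝ → Fin N → ℝ}
  {ξ : Fin N → ℝ}

theorem hasDerivWithinAt_Ici_of_le (hX : NominalTraj W κ ρ1 ρ2 T1 X) (hT1 : 0 ≤ T1) {t : ℝ}
    (ht : T1 ≤ t) : HasDerivWithinAt X ((-ρ1) • sLap W *ᵥ X t) (Ici t) t := by
  have hd : ∀ s, T1 < s → HasDerivAt X ((-ρ1) • sLap W *ᵥ X s) s := fun s hs => by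
    simpa [gain_of_le hs.le] using hX.2 s (hT1.trans hs.le) hs.ne'
  rcases ht.lt_or_eq with ht | rfl
  · exact (hd t ht).hasDerivWithinAt
  -- `X` need not be differentiable at `T1`; its right derivative comes from the limit of `X'`.
  exact hasDerivWithinAt_Ici_of_forall_gt hX.1.continuousWithinAt hd
    (((continuous_const.matrix_mulVec hX.1).const_smul (-ρ1) :
      Continuous fun s => (-ρ1) • sLap W *ᵥ X s)).continuousWithinAt

theorem eq_of_le (hX : NominalTraj W κ ρ1 ρ2 T1 X) (hT1 : 0 ≤ T1) (hrest : sLap W *ᵥ X T1 = 0)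
    {t : ℝ} (ht : T1 ≤ t) : X t = X T1 := by
  obtain ⟨K, hK⟩ : ∃ K, LipschitzWith K fun x => ((-ρ1) • sLap W) *ᵥ x :=
    ⟨_, (LinearMap.toContinuousLinearMap (Matrix.mulVecLin ((-ρ1) • sLap W))).lipschitz⟩
  refine ODE_solution_unique_of_mem_Icc_right (v := fun _ x => ((-ρ1) • sLap W) *ᵥ x)
    (s := fun _ => univ) (K := K) (fun _ _ => hK.lipschitzOnWith) hX.1.continuousOn
    (fun s hs => ?_) (fun _ _ => mem_univ _) continuousOn_const (fun s _ => ?_)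
    (fun _ _ => mem_univ _) rfl ⟨ht, le_rfl⟩
  · rw [Matrix.smul_mulVec]
    exact hX.hasDerivWithinAt_Ici_of_le hT1 hs.1
  · rw [Matrix.smul_mulVec, hrest, smul_zero]
    exact hasDerivWithinAt_const s (Ici s) (X T1)

theorem dotProduct_eq (hX : NominalTraj W κ ρ1 ρ2 T1 X)
    (hξ : ξ ᵥ* sLap W = 0) {t : ℝ} (ht : t ∈ Icc 0 T1) : ξ ⬝ᵥ X t = ξ ⬝ᵥ X 0 := by
  refine constant_of_has_deriv_right_zero (f := fun s => ξ ⬝ᵥ X s)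
    (continuous_const.dotProduct hX.1).continuousOn (fun s hs => ?_) t ht
  have := (hX.2 s hs.1 hs.2.ne).dotProduct_const ξ
  rw [dotProduct_smul, Matrix.dotProduct_mulVec, hξ, zero_dotProduct, smul_zero] at this
  exact this.hasDerivWithinAt

theorem hasDerivAt_sum_mul_sub_sq (hX : NominalTraj W κ ρ1 ρ2 T1 X) (hW : ∀ i j, 0 ≤ W i j)
    (hξ : ξ ᵥ* sLap W = 0) (c : ℝ) {t : ℝ} (ht : 0 ≤ t) (htT : t ≠ T1) :
    HasDerivAt (fun s => ∑ i, ξ i * (X s i - c) ^ 2)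
      (-(ρ1 + ρ2 * gain κ T1 t) * dirichletEnergy ξ W (X t - fun _ => c)) t := by
  have hL : sLap W *ᵥ X t = sLap W *ᵥ (X t - fun _ => c) := by
    rw [Matrix.mulVec_sub, sLap_mulVec_const hW, sub_zero]
  refine (HasDerivAt.fun_sum fun i _ => (((hasDerivAt_pi.1 (hX.2 t ht htT) i).sub_const c).pow 2
    ).const_mul (ξ i)).congr_deriv ?_
  rw [← two_mul_sum_mul_sLap_mulVec hW hξ, ← hL, Finset.mul_sum, Finset.mul_sum]
  refine Finset.sum_congr rfl fun i _ => ?_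
  simp only [Pi.smul_apply, smul_eq_mul, Pi.sub_apply]
  ring

theorem eq_const_at [NeZero N] (hX : NominalTraj W κ ρ1 ρ2 T1 X) (hW : ∀ i j, 0 ≤ W i j)
    (hSC : StronglyConnected W) (hκ : 0 < κ) (hρ1 : 0 ≤ ρ1) (hρ2 : 0 < ρ2) (hT1 : 0 < T1)
    (hξ : ∀ i, 0 < ξ i) (hξW : ξ ᵥ* sLap W = 0) :
    X T1 = fun _ => (ξ ⬝ᵥ X 0) / ∑ i, ξ i := by
  set c := (ξ ⬝ᵥ X 0) / ∑ i, ξ i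
  have hsum : 0 < ∑ i, ξ i := Finset.sum_pos (fun i _ => hξ i) Finset.univ_nonempty
  have horth : ∀ t ∈ Ico 0 T1, ξ ⬝ᵥ (X t - fun _ => c) = 0 := fun t ht => by
    rw [dotProduct_sub, hX.dotProduct_eq hξW (Ico_subset_Icc_self ht)]
    simp only [dotProduct, ← Finset.sum_mul, c]
    field_simp
    ring
  obtain ⟨lam, hlam, hcoer⟩ := exists_pos_mul_sq_norm_le_dirichletEnergy hW hξ hSC
  have hVT1 : ∑ i, ξ i * (X T1 i - c) ^ 2 ≤ 0 :=
    le_zero_of_hasDerivAt_le_neg_div_sub (V := fun s => ∑ i, ξ i * (X s i - c) ^ 2)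
      (by positivity : 0 < ρ2 * κ * lam / ∑ i, ξ i) hT1
      (Continuous.continuousWithinAt (by have := hX.1; fun_prop))
      (fun t ht => hX.hasDerivAt_sum_mul_sub_sq hW hξW c ht.1 ht.2.ne)
      (fun t ht => by
        simpa only [Pi.sub_apply] using neg_add_mul_gain_mul_le (fun i => (hξ i).le) hsum
          hκ.le hρ1 hρ2.le hlam.le (hcoer _ (horth t ht)) ht)
  have hterm := fun i => mul_nonneg (hξ i).le (sq_nonneg (X T1 i - c))
  ext i
  have := (Finset.sum_eq_zero_iff_of_nonneg fun i _ => hterm i).1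
    (hVT1.antisymm (Finset.sum_nonneg fun i _ => hterm i)) i (Finset.mem_univ i)
  simpa [(hξ i).ne', sub_eq_zero] using this

theorem exists_forall_ge_eq_const [NeZero N] (hX : NominalTraj W κ ρ1 ρ2 T1 X)
    (hW : ∀ i j, 0 ≤ W i j) (hSC : StronglyConnected W) (hκ : 0 < κ) (hρ1 : 0 ≤ ρ1)
    (hρ2 : 0 < ρ2) (hT1 : 0 < T1) : ∃ c : ℝ, ∀ t, T1 ≤ t → X t = fun _ => c := by
  obtain ⟨ξ, hξ, hξW⟩ := exists_pos_vecMul_sLap_eq_zero hW hSC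
  have hXT1 := hX.eq_const_at hW hSC hκ hρ1 hρ2 hT1 hξ hξW
  refine ⟨(ξ ⬝ᵥ X 0) / ∑ i, ξ i, fun t ht => ?_⟩
  rw [← hXT1]
  exact hX.eq_of_le hT1.le (by rw [hXT1]; exact sLap_mulVec_const hW _) ht

end NominalTraj

section Gauge

variable {N : ℕ} {W : Matrix (Fin N) (Fin N) ℝ} {g : Fin N → ℝ}

theorem StronglyConnected.map_abs (hW : StronglyConnected W) : StronglyConnected (W.map abs) := by
  simpa [StronglyConnected, Reaches, Matrix.map_apply] using hW

theorem IsGauge.mul_self (hg : IsGauge W univ g) (k : Fin N) : g k * g k = 1 := by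
  rcases hg.1 k (mem_univ k) with h | h <;> simp [h]

theorem IsGauge.mul_sLap_mulVec (hg : IsGauge W univ g) (x : Fin N → ℝ) :
    g * (sLap W *ᵥ x) = sLap (W.map abs) *ᵥ (g * x) := by
  have hflip : ∀ k l, g k * W k l = |W k l| * g l := fun k l => by
    rw [← hg.2 k (mem_univ k) l (mem_univ l), mul_assoc _ (g l), hg.mul_self, mul_one]
  ext k
  simp only [Pi.mul_apply, sLap_mulVec_apply, Matrix.map_apply, abs_abs, mul_sub, Finset.mul_sum]
  rw [mul_left_comm]
  congr 1
  exact Finset.sum_congr rfl fun l _ => by rw [← mul_assoc, hflip, mul_assoc]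

theorem NominalTraj.mul_of_isGauge {κ ρ1 ρ2 T1 : ℝ} {X : ℝ → Fin N → ℝ}
    (hX : NominalTraj W κ ρ1 ρ2 T1 X) (hg : IsGauge W univ g) :
    NominalTraj (W.map abs) κ ρ1 ρ2 T1 (fun t => g * X t) := by
  refine ⟨continuous_const.mul hX.1, fun t ht htT => ?_⟩
  rw [← hg.mul_sLap_mulVec, ← mul_smul_comm]
  exact hasDerivAt_pi.2 fun k => (hasDerivAt_pi.1 (hX.2 t ht htT) k).const_mul (g k)

end Gauge

theorem prescribed_time_bipartite_consensus_strong_general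
    {N : ℕ} (hN : 2 ≤ N) (W : Matrix (Fin N) (Fin N) ℝ)
    (hSC : StronglyConnected W)
    (g : Fin N → ℝ) (hg : IsGauge W Set.univ g)
    (κ ρ1 ρ2 T1 : ℝ) (hκ : 2 < κ) (hρ1 : 0 < ρ1) (hρ2 : 0 < ρ2) (hT1 : 0 < T1)
    (X : ℝ → Fin N → ℝ) (hX : NominalTraj W κ ρ1 ρ2 T1 X) :
    ∃ c : ℝ, ∀ t : ℝ, T1 ≤ t → ∀ k, X t k = c * g k := by
  have : NeZero N := ⟨by omega⟩
  obtain ⟨c, hc⟩ := (hX.mul_of_isGauge hg).exists_forall_ge_eq_const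
    (fun i j => abs_nonneg (W i j)) hSC.map_abs (by linarith) hρ1.le hρ2 hT1
  refine ⟨c, fun t ht k => ?_⟩
  have hk : g k * X t k = c := congrFun (hc t ht) k
  rw [← hk, mul_right_comm, hg.mul_self, one_mul]

theorem prescribed_time_bipartite_consensus_strong
    {N : ℕ} (hN : 2 ≤ N) (W : Matrix (Fin N) (Fin N) ℝ)
    (hdiag : ∀ k, W k k = 0)
    (hSC : StronglyConnected W)
    (g : Fin N → ℝ) (hg : IsGauge W Set.univ g)
    (κ ρ1 ρ2 T1 : ℝ) (hκ : 2 < κ) (hρ1 : 0 < ρ1) (hρ2 : 0 < ρ2) (hT1 : 0 < T1)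
    (X : ℝ → Fin N → ℝ) (hX : NominalTraj W κ ρ1 ρ2 T1 X) :
    ∃ c : ℝ, ∀ t : ℝ, T1 ≤ t → ∀ k, X t k = c * g k :=
  prescribed_time_bipartite_consensus_strong_general hN W hSC g hg κ ρ1 ρ2 T1 hκ hρ1 hρ2 hT1 X hX
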